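/- arXiv:2306.08459 — 3 statements merged into one kernel-verified Lean document; each statement's English description precedes it below -/
import Mathlib

section
/- Consider the input affine system ẋ = f(x) + g(x)u, y = h(x), and let V : ℝⁿ → ℝ be differentiable with V(x) ≥ 0 for all x and V(0) = 0. Then the negative imaginary dissipation inequality ∇V(x)ᵀ (f(x) + g(x)u) ≤ uᵀ ∇h(x)ᵀ (f(x) + g(x)u) holds for all x, u ∈ ℝⁿ if and only if there exist an integer q ≥ 1 and functions L : ℝⁿ → ℝ^q, W : ℝⁿ → ℝ^{q×n} such that for all x ∈ ℝⁿ: (i) (1/2) g(x)ᵀ∇V(x) = (1/2) ∇h(x)ᵀ f(x) − W(x)ᵀ L(x), (ii) ∇V(x)ᵀ f(x) = −L(x)ᵀ L(x), and (iii) the symmetric part of g(x)ᵀ ∇h(x) equals W(x)ᵀ W(x). -/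
/-!
Fix `x` and put `c = -∇V(x)ᵀ f(x)`, `b = ½ ∇h(x)ᵀ f(x) - ½ g(x)ᵀ ∇V(x)` and `S` the symmetric part
of `g(x)ᵀ ∇h(x)`. The gap between supply rate and storage rate is the quadratic
`u ↦ c + 2 bᵀu + uᵀ S u`, so the dissipation inequality says that it is nonnegative on `ℝⁿ`.
Homogenizing, this is positive semidefiniteness of the block matrix `[[c, bᵀ], [b, S]]`; a
Gram factorization `Bᵀ B` of it, with `L` the first column of `B` and `W` the others, is exactly
(i)–(iii). Conversely, under (i)–(iii) the same quadratic equals `|L + W u|² ≥ 0`.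
-/

open Matrix Filter Topology

variable {ι : Type*} [Fintype ι]

noncomputable def Matrix.symmPart (M : Matrix ι ι ℝ) : Matrix ι ι ℝ := (1/2 : ℝ) • (M + Mᵀ)

omit [Fintype ι] in
theorem Matrix.isSymm_symmPart (M : Matrix ι ι ℝ) : M.symmPart.IsSymm := by
  simp only [IsSymm, symmPart, transpose_smul, transpose_add, transpose_transpose, add_comm]

theorem Matrix.dotProduct_symmPart_mulVec (M : Matrix ι ι ℝ) (u : ι → ℝ) :
    u ⬝ᵥ (M.symmPart *ᵥ u) = u ⬝ᵥ (M *ᵥ u) := by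
  rw [symmPart, smul_mulVec, dotProduct_smul, add_mulVec, dotProduct_add,
    dotProduct_transpose_mulVec, smul_eq_mul]
  ring

theorem Matrix.PosSemidef.exists_eq_transpose_mul {m : Type*} [Fintype m] [DecidableEq m]
    {M : Matrix m m ℝ} (hM : M.PosSemidef) :
    ∃ B : Matrix (Fin (Fintype.card m)) m ℝ, M = Bᵀ * B := by
  open scoped MatrixOrder in
  obtain ⟨B, rfl⟩ := CStarAlgebra.nonneg_iff_eq_star_mul_self.mp hM.nonneg
  refine ⟨B.submatrix (Fintype.equivFin m).symm id, ?_⟩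
  rw [transpose_submatrix, submatrix_mul_equiv, submatrix_id_id, star_eq_conjTranspose,
    conjTranspose_eq_transpose_of_trivial]

theorem nonneg_of_forall_nonneg_homogenized {c β γ : ℝ} (h : ∀ s, 0 ≤ c + s * β + s ^ 2 * γ)
    (t : ℝ) : 0 ≤ c * t ^ 2 + t * β + γ := by
  have off_zero : ∀ t ≠ 0, 0 ≤ c * t ^ 2 + t * β + γ := fun t ht => by
    have rescale : c * t ^ 2 + t * β + γ = t ^ 2 * (c + t⁻¹ * β + t⁻¹ ^ 2 * γ) := by
      field_simp
    rw [rescale]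
    exact mul_nonneg (sq_nonneg t) (h t⁻¹)
  rcases eq_or_ne t 0 with rfl | ht
  · have hlim : Tendsto (fun t : ℝ => c * t ^ 2 + t * β + γ) (𝓝[≠] 0)
        (𝓝 (c * 0 ^ 2 + 0 * β + γ)) :=
      (Continuous.tendsto (by fun_prop) 0).mono_left nhdsWithin_le_nhds
    exact ge_of_tendsto hlim (eventually_nhdsWithin_of_forall off_zero)
  · exact off_zero t ht

theorem dotProduct_fromBlocks_replicate_mulVec (c t : ℝ) (b u : ι → ℝ) (S : Matrix ι ι ℝ) :
    ((fun _ : Unit => t) ⊕ᵥ u) ⬝ᵥ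
        (fromBlocks (of fun _ _ => c) (replicateRow Unit b) (replicateCol Unit b) S *ᵥ
          ((fun _ : Unit => t) ⊕ᵥ u))
      = c * t ^ 2 + t * (2 * b ⬝ᵥ u) + u ⬝ᵥ (S *ᵥ u) := by
  have hcol : u ⬝ᵥ (replicateCol Unit b *ᵥ fun _ => t) = t * b ⬝ᵥ u := by
    simp only [dotProduct, mulVec, replicateCol_apply, Finset.univ_unique, Finset.sum_singleton,
      Finset.mul_sum]
    exact Finset.sum_congr rfl fun _ _ => by ring
  rw [fromBlocks_mulVec, sumElim_dotProduct_sumElim, Sum.elim_comp_inl, Sum.elim_comp_inr,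
    dotProduct_add, dotProduct_add, hcol]
  simp only [dotProduct, Finset.univ_unique, PUnit.default_eq_unit, mulVec, of_apply,
    Finset.sum_const, Finset.card_singleton, one_smul, replicateRow_apply]
  ring

theorem posSemidef_fromBlocks_of_forall_nonneg {c : ℝ} {b : ι → ℝ} {S : Matrix ι ι ℝ}
    (hS : S.IsSymm) (h : ∀ u, 0 ≤ c + 2 * b ⬝ᵥ u + u ⬝ᵥ (S *ᵥ u)) :
    (fromBlocks (of fun _ _ => c) (replicateRow Unit b) (replicateCol Unit b) S).PosSemidef := by
  refine .of_dotProduct_mulVec_nonneg ?_ fun v => ?_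
  · exact .fromBlocks (isHermitian_iff_isSymm.mpr rfl) (conjTranspose_replicateRow b)
      (isHermitian_iff_isSymm.mpr hS)
  · have hv : v = (fun _ => v (.inl ())) ⊕ᵥ (v ∘ .inr) := by ext (_ | _) <;> rfl
    rw [star_trivial, hv, dotProduct_fromBlocks_replicate_mulVec]
    refine nonneg_of_forall_nonneg_homogenized (fun s => ?_) _
    convert h (s • v ∘ .inr) using 1
    rw [dotProduct_smul, mulVec_smul, dotProduct_smul, smul_dotProduct, smul_eq_mul, smul_eq_mul,
      smul_eq_mul]
    ring

theorem exists_gram_of_forall_nonneg {c : ℝ} {b : ι → ℝ} {S : Matrix ι ι ℝ}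
    (hS : S.IsSymm) (h : ∀ u, 0 ≤ c + 2 * b ⬝ᵥ u + u ⬝ᵥ (S *ᵥ u)) :
    ∃ (l : Fin (Fintype.card (Unit ⊕ ι)) → ℝ) (W : Matrix (Fin (Fintype.card (Unit ⊕ ι))) ι ℝ),
      c = l ⬝ᵥ l ∧ b = Wᵀ *ᵥ l ∧ S = Wᵀ * W := by
  classical
  obtain ⟨B, hB⟩ := (posSemidef_fromBlocks_of_forall_nonneg hS h).exists_eq_transpose_mul
  rw [← fromCols_toCols B, transpose_fromCols, fromRows_mul_fromCols, fromBlocks_inj] at hB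
  obtain ⟨hc, -, hb, hS⟩ := hB
  refine ⟨fun k => B k (.inl ()), toCols₂ B, ?_, ?_, hS⟩
  · simpa [Matrix.mul_apply, dotProduct] using congrFun₂ hc () ()
  · ext i
    simpa [Matrix.mul_apply, mulVec, dotProduct] using congrFun₂ hb i ()

theorem dotProduct_self_add_mulVec {κ : Type*} [Fintype κ] (l : κ → ℝ) (W : Matrix κ ι ℝ)
    (u : ι → ℝ) :
    (l + W *ᵥ u) ⬝ᵥ (l + W *ᵥ u) = l ⬝ᵥ l + 2 * (Wᵀ *ᵥ l) ⬝ᵥ u + u ⬝ᵥ ((Wᵀ * W) *ᵥ u) := by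
  have hcross : l ⬝ᵥ (W *ᵥ u) = (Wᵀ *ᵥ l) ⬝ᵥ u := by
    rw [dotProduct_mulVec, mulVec_transpose]
  have hsquare : (W *ᵥ u) ⬝ᵥ (W *ᵥ u) = u ⬝ᵥ ((Wᵀ * W) *ᵥ u) := by
    rw [dotProduct_mulVec, ← mulVec_transpose, dotProduct_comm, mulVec_mulVec]
  rw [add_dotProduct, dotProduct_add, dotProduct_add, dotProduct_comm (W *ᵥ u) l, hcross, hsquare]
  ring

theorem supplyRate_sub_storageRate (a F u : ι → ℝ) (G H : Matrix ι ι ℝ) :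
    u ⬝ᵥ (Hᵀ *ᵥ (F + G *ᵥ u)) - a ⬝ᵥ (F + G *ᵥ u)
      = -(a ⬝ᵥ F) + 2 * ((1/2 : ℝ) • (Hᵀ *ᵥ F) - (1/2 : ℝ) • (Gᵀ *ᵥ a)) ⬝ᵥ u
        + u ⬝ᵥ ((Gᵀ * H).symmPart *ᵥ u) := by
  have hHF : u ⬝ᵥ (Hᵀ *ᵥ F) = (Hᵀ *ᵥ F) ⬝ᵥ u := dotProduct_comm _ _
  have hGa : a ⬝ᵥ (G *ᵥ u) = (Gᵀ *ᵥ a) ⬝ᵥ u := by rw [dotProduct_mulVec, mulVec_transpose]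
  have hHG : u ⬝ᵥ (Hᵀ *ᵥ (G *ᵥ u)) = u ⬝ᵥ ((Gᵀ * H).symmPart *ᵥ u) := by
    rw [dotProduct_symmPart_mulVec, ← mulVec_mulVec, dotProduct_transpose_mulVec,
      dotProduct_transpose_mulVec, dotProduct_comm]
  rw [mulVec_add, dotProduct_add, dotProduct_add, sub_dotProduct, smul_dotProduct, smul_dotProduct,
    smul_eq_mul, smul_eq_mul, hHF, hGa, hHG]
  ring

theorem negativeImaginary_iff_factorization_general {n : ℕ}
    (f : (Fin n → ℝ) → (Fin n → ℝ))
    (g : (Fin n → ℝ) → Matrix (Fin n) (Fin n) ℝ)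
    (gradV : (Fin n → ℝ) → (Fin n → ℝ))
    (gradh : (Fin n → ℝ) → Matrix (Fin n) (Fin n) ℝ) :
    (∀ x u : Fin n → ℝ,
        gradV x ⬝ᵥ (f x + g x *ᵥ u) ≤ u ⬝ᵥ ((gradh x)ᵀ *ᵥ (f x + g x *ᵥ u)))
    ↔ ∃ q : ℕ, 1 ≤ q ∧
        ∃ (L : (Fin n → ℝ) → (Fin q → ℝ)) (W : (Fin n → ℝ) → Matrix (Fin q) (Fin n) ℝ),
          ∀ x : Fin n → ℝ,
            (1/2 : ℝ) • ((g x)ᵀ *ᵥ gradV x)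
                = (1/2 : ℝ) • ((gradh x)ᵀ *ᵥ f x) - (W x)ᵀ *ᵥ L x
            ∧ gradV x ⬝ᵥ f x = -(L x ⬝ᵥ L x)
            ∧ (1/2 : ℝ) • ((g x)ᵀ * gradh x + ((g x)ᵀ * gradh x)ᵀ)
                = (W x)ᵀ * W x := by
  have gap x u := supplyRate_sub_storageRate (gradV x) (f x) u (g x) (gradh x)
  constructor
  · intro hdis
    choose L W hc hb hS using fun x => exists_gram_of_forall_nonneg (isSymm_symmPart _)
      fun u => gap x u ▸ sub_nonneg.mpr (hdis x u)
    refine ⟨_, Fintype.card_pos, L, W, fun x => ⟨?_, neg_eq_iff_eq_neg.mp (hc x), hS x⟩⟩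
    rw [← hb x, sub_sub_cancel]
  · rintro ⟨q, -, L, W, hLW⟩ x u
    obtain ⟨hb, hc, hS⟩ := hLW x
    have hWL : (W x)ᵀ *ᵥ L x
        = (1/2 : ℝ) • ((gradh x)ᵀ *ᵥ f x) - (1/2 : ℝ) • ((g x)ᵀ *ᵥ gradV x) := by
      rw [hb, sub_sub_cancel]
    refine sub_nonneg.mp ?_
    rw [gap, hc, neg_neg, ← hWL, show ((g x)ᵀ * gradh x).symmPart = (W x)ᵀ * W x from hS,
      ← dotProduct_self_add_mulVec]
    exact dotProduct_self_star_nonneg _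

/-- For the input affine system ẋ = f(x) + g(x)u, y = h(x), with a
nonnegative differentiable storage function `V`, `V 0 = 0`, the negative
imaginary dissipation inequality `∇V(x)ᵀ(f(x) + g(x)u) ≤ uᵀ∇h(x)ᵀ(f(x) + g(x)u)`
holds for all `x`, `u` iff there exist `q ≥ 1` and functions `L : ℝⁿ → ℝ^q`,
`W : ℝⁿ → ℝ^{q×n}` such that for all `x`:
(i) `(1/2) g(x)ᵀ∇V(x) = (1/2)∇h(x)ᵀf(x) − W(x)ᵀL(x)`,
(ii) `∇V(x)ᵀf(x) = −L(x)ᵀL(x)`,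
(iii) the symmetric part of `g(x)ᵀ∇h(x)` equals `W(x)ᵀW(x)`. -/
theorem negativeImaginary_iff_factorization {n : ℕ}
    (f : (Fin n → ℝ) → (Fin n → ℝ))
    (g : (Fin n → ℝ) → Matrix (Fin n) (Fin n) ℝ)
    (h : (Fin n → ℝ) → (Fin n → ℝ))
    (hf0 : f 0 = 0) (hh0 : h 0 = 0)
    (V : (Fin n → ℝ) → ℝ)
    (gradV : (Fin n → ℝ) → (Fin n → ℝ))
    (gradh : (Fin n → ℝ) → Matrix (Fin n) (Fin n) ℝ)
    (hVdiff : Differentiable ℝ V)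
    (hVgrad : ∀ x v, fderiv ℝ V x v = gradV x ⬝ᵥ v)
    (hhdiff : Differentiable ℝ h)
    (hhgrad : ∀ x v, fderiv ℝ h x v = (gradh x)ᵀ *ᵥ v)
    (hVnonneg : ∀ x, 0 ≤ V x) (hV0 : V 0 = 0) :
    (∀ x u : Fin n → ℝ,
        gradV x ⬝ᵥ (f x + g x *ᵥ u) ≤ u ⬝ᵥ ((gradh x)ᵀ *ᵥ (f x + g x *ᵥ u)))
    ↔ ∃ q : ℕ, 1 ≤ q ∧
        ∃ (L : (Fin n → ℝ) → (Fin q → ℝ)) (W : (Fin n → ℝ) → Matrix (Fin q) (Fin n) ℝ),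
          ∀ x : Fin n → ℝ,
            (1/2 : ℝ) • ((g x)ᵀ *ᵥ gradV x)
                = (1/2 : ℝ) • ((gradh x)ᵀ *ᵥ f x) - (W x)ᵀ *ᵥ L x
            ∧ gradV x ⬝ᵥ f x = -(L x ⬝ᵥ L x)
            ∧ (1/2 : ℝ) • ((g x)ᵀ * gradh x + ((g x)ᵀ * gradh x)ᵀ)
                = (W x)ᵀ * W x :=
  negativeImaginary_iff_factorization_general f g gradV gradh
end

section
/- Let A, B ∈ ℝ^{n×n} with B invertible, and let P ∈ ℝ^{n×n} be symmetric positive definite satisfying (1/2)PBBᵀP − 2B⁻ᵀB⁻¹ + (B⁻¹A)ᵀ(B⁻¹A) = 0. Then the 2n×2n symmetric block matrix [[AᵀP + PA, PB − AᵀB⁻ᵀ], [BᵀP − B⁻¹A, −2I]] is negative semidefinite if and only if the 2n×2n symmetric block matrix [[AᵀP + PA + 2B⁻ᵀB⁻¹, PB], [BᵀP, −2I]] is negative semidefinite. -/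
open Matrix

/-!
Both block matrices have the shape `[[X, Y], [Yᵀ, -2I]]`, so completing the square in the second
block variable reduces their negative semidefiniteness to that of the Schur complement
`X + ½ Y Yᵀ`. With `C = BᵀP + B⁻¹A`, the Schur complement of the first matrix is `½ CᵀC` and,
by the identity assumed on `P`, that of the second is `CᵀC`. Both conditions therefore say `C = 0`.
-/

section QuadraticForm

variable {ι κ R : Type*} [Fintype ι] [Fintype κ]

section OrderedCommRing

variable [CommRing R] [LinearOrder R] [IsStrictOrderedRing R]

theorem dotProduct_self_nonneg (v : κ → R) : 0 ≤ v ⬝ᵥ v :=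
  Finset.sum_nonneg fun i _ => mul_self_nonneg (v i)

theorem forall_dotProduct_smul_mulVec_nonpos_iff (M : Matrix ι ι R) {c : R} (hc : 0 < c) :
    (∀ x, x ⬝ᵥ (c • M) *ᵥ x ≤ 0) ↔ ∀ x, x ⬝ᵥ M *ᵥ x ≤ 0 := by
  simp only [smul_mulVec, dotProduct_smul, smul_nonpos_iff_nonpos_of_pos_left hc]

theorem forall_dotProduct_transpose_mul_self_mulVec_nonpos_iff (C : Matrix κ ι R) :
    (∀ x, x ⬝ᵥ (Cᵀ * C) *ᵥ x ≤ 0) ↔ C = 0 := by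
  have hC : ∀ x, x ⬝ᵥ (Cᵀ * C) *ᵥ x = (C *ᵥ x) ⬝ᵥ (C *ᵥ x) := fun x => by
    rw [← mulVec_mulVec, dotProduct_mulVec, vecMul_transpose]
  simp only [hC, ext_iff_mulVec (B := 0), zero_mulVec, ← dotProduct_self_eq_zero (v := C *ᵥ _)]
  exact forall_congr' fun x => (dotProduct_self_nonneg _).ge_iff_eq'

end OrderedCommRing

variable [Field R] [DecidableEq κ]

theorem dotProduct_fromBlocks_neg_smul_one_mulVec (X : Matrix ι ι R) (Y : Matrix ι κ R)
    {c : R} (hc : c ≠ 0) (x : ι → R) (u : κ → R) :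
    (x ⊕ᵥ u) ⬝ᵥ fromBlocks X Y Yᵀ (-c • 1) *ᵥ (x ⊕ᵥ u) =
      x ⬝ᵥ (X + c⁻¹ • (Y * Yᵀ)) *ᵥ x
        - c * ((u - c⁻¹ • (Yᵀ *ᵥ x)) ⬝ᵥ (u - c⁻¹ • (Yᵀ *ᵥ x))) := by
  have hY : ∀ v, x ⬝ᵥ Y *ᵥ v = (Yᵀ *ᵥ x) ⬝ᵥ v := fun v => by
    rw [dotProduct_mulVec, mulVec_transpose]
  rw [fromBlocks_mulVec, sumElim_dotProduct_sumElim]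
  simp only [Sum.elim_comp_inl, Sum.elim_comp_inr, add_mulVec, smul_mulVec, one_mulVec,
    ← mulVec_mulVec, dotProduct_add, dotProduct_smul, hY, dotProduct_sub, sub_dotProduct,
    smul_dotProduct, smul_eq_mul, dotProduct_comm u (Yᵀ *ᵥ x)]
  field_simp
  ring

theorem forall_dotProduct_fromBlocks_mulVec_nonpos_iff [LinearOrder R] [IsStrictOrderedRing R]
    (X : Matrix ι ι R) (Y : Matrix ι κ R) {c : R} (hc : 0 < c) :
    (∀ z, z ⬝ᵥ fromBlocks X Y Yᵀ (-c • 1) *ᵥ z ≤ 0) ↔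
      ∀ x, x ⬝ᵥ (X + c⁻¹ • (Y * Yᵀ)) *ᵥ x ≤ 0 := by
  refine ⟨fun h x => ?_, fun h z => ?_⟩
  · have := h (x ⊕ᵥ c⁻¹ • (Yᵀ *ᵥ x))
    rwa [dotProduct_fromBlocks_neg_smul_one_mulVec X Y hc.ne', sub_self, dotProduct_zero,
      mul_zero, sub_zero] at this
  · rw [← Sum.elim_comp_inl_inr z, dotProduct_fromBlocks_neg_smul_one_mulVec X Y hc.ne']
    nlinarith [h (z ∘ Sum.inl),
      dotProduct_self_nonneg (z ∘ Sum.inr - c⁻¹ • (Yᵀ *ᵥ (z ∘ Sum.inl)))]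

end QuadraticForm

section SchurComplements

variable {m R : Type*} [Fintype m] [DecidableEq m] [Field R] {A B P : Matrix m m R}

theorem transpose_mul_self_transpose_mul_add_inv_mul (hB : IsUnit B.det) (hP : Pᵀ = P) :
    (Bᵀ * P + B⁻¹ * A)ᵀ * (Bᵀ * P + B⁻¹ * A) =
      P * B * Bᵀ * P + (Aᵀ * P + P * A) + (B⁻¹ * A)ᵀ * (B⁻¹ * A) := by
  have hBt : IsUnit Bᵀ.det := by rwa [det_transpose]
  simp only [transpose_add, transpose_mul, hP, transpose_transpose, add_mul, mul_add,
    Matrix.mul_assoc, mul_nonsing_inv_cancel_left _ _ hB, transpose_nonsing_inv,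
    nonsing_inv_mul_cancel_left _ _ hBt]
  abel

variable [CharZero R]

theorem negImag_schur_eq (hB : IsUnit B.det) (hP : Pᵀ = P) :
    Aᵀ * P + P * A + (2 : R)⁻¹ • ((P * B - Aᵀ * B⁻¹ᵀ) * (P * B - Aᵀ * B⁻¹ᵀ)ᵀ) =
      (2 : R)⁻¹ • ((Bᵀ * P + B⁻¹ * A)ᵀ * (Bᵀ * P + B⁻¹ * A)) := by
  have hBt : IsUnit Bᵀ.det := by rwa [det_transpose]
  rw [transpose_mul_self_transpose_mul_add_inv_mul hB hP]
  simp only [transpose_sub, transpose_mul, hP, transpose_transpose, sub_mul, mul_sub,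
    Matrix.mul_assoc, mul_nonsing_inv_cancel_left _ _ hB, transpose_nonsing_inv,
    nonsing_inv_mul_cancel_left _ _ hBt]
  module

theorem l2Gain_schur_eq (hB : IsUnit B.det) (hP : Pᵀ = P)
    (hiden : (1/2 : R) • (P * B * Bᵀ * P) - (2 : R) • (B⁻¹ᵀ * B⁻¹)
        + (B⁻¹ * A)ᵀ * (B⁻¹ * A) = 0) :
    Aᵀ * P + P * A + (2 : R) • (B⁻¹ᵀ * B⁻¹) + (2 : R)⁻¹ • (P * B * (P * B)ᵀ) =
      (Bᵀ * P + B⁻¹ * A)ᵀ * (Bᵀ * P + B⁻¹ * A) := by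
  rw [transpose_mul_self_transpose_mul_add_inv_mul hB hP, transpose_mul, hP, ← Matrix.mul_assoc,
    ← sub_eq_zero, ← neg_eq_zero, ← hiden]
  module

end SchurComplements

/-- For `B` invertible and `P` symmetric positive definite with
`(1/2)PBBᵀP − 2B⁻ᵀB⁻¹ + (B⁻¹A)ᵀ(B⁻¹A) = 0`, the block matrix
`[[AᵀP + PA, PB − AᵀB⁻ᵀ], [BᵀP − B⁻¹A, −2I]]` is negative semidefinite iff the
block matrix `[[AᵀP + PA + 2B⁻ᵀB⁻¹, PB], [BᵀP, −2I]]` is negative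
semidefinite. -/
theorem linear_NI_LMI_iff_L2_LMI {n : ℕ}
    (A B P : Matrix (Fin n) (Fin n) ℝ)
    (hB : IsUnit B.det)
    (hP : P.PosDef)
    (hiden : (1/2 : ℝ) • (P * B * Bᵀ * P) - (2 : ℝ) • (B⁻¹ᵀ * B⁻¹)
        + (B⁻¹ * A)ᵀ * (B⁻¹ * A) = 0) :
    (∀ z : Fin n ⊕ Fin n → ℝ,
        z ⬝ᵥ ((Matrix.fromBlocks
            (Aᵀ * P + P * A) (P * B - Aᵀ * B⁻¹ᵀ)
            (Bᵀ * P - B⁻¹ * A) (-(2 : ℝ) • (1 : Matrix (Fin n) (Fin n) ℝ))) *ᵥ z) ≤ 0)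
    ↔ (∀ z : Fin n ⊕ Fin n → ℝ,
        z ⬝ᵥ ((Matrix.fromBlocks
            (Aᵀ * P + P * A + (2 : ℝ) • (B⁻¹ᵀ * B⁻¹)) (P * B)
            (Bᵀ * P) (-(2 : ℝ) • (1 : Matrix (Fin n) (Fin n) ℝ))) *ᵥ z) ≤ 0) := by
  have hPt : Pᵀ = P := isHermitian_iff_isSymm.mp hP.isHermitian
  rw [show Bᵀ * P - B⁻¹ * A = (P * B - Aᵀ * B⁻¹ᵀ)ᵀ by simp [hPt],
    show Bᵀ * P = (P * B)ᵀ by simp [hPt],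
    forall_dotProduct_fromBlocks_mulVec_nonpos_iff _ _ two_pos,
    forall_dotProduct_fromBlocks_mulVec_nonpos_iff _ _ two_pos,
    negImag_schur_eq hB hPt, l2Gain_schur_eq hB hPt hiden,
    forall_dotProduct_smul_mulVec_nonpos_iff _ (inv_pos.mpr two_pos)]
end

section
/- Let A, B ∈ ℝ^{n×n} with B invertible and AB = BA, and let P ∈ ℝ^{n×n} be symmetric positive definite such that (A − 2BAB⁻¹)ᵀP + P(A − 2BAB⁻¹) is negative definite. Then there exist a symmetric positive definite matrix T ∈ ℝ^{n×n} and a scalar β > 0 such that the 2n×2n symmetric block matrix [[AᵀP + PA + T − (4/β)AᵀB⁻ᵀB⁻¹A, PB − (2/β)AᵀB⁻ᵀ], [BᵀP − (2/β)B⁻¹A, −(1/β)I]] is negative semidefinite. -/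
/-!
Commutation gives `BAB⁻¹ = A`, so the closed-loop matrix is `-A` and the stability hypothesis says
that `S = AᵀP + PA` is positive definite. With `K = PB` and `C = B⁻¹A`, choose `β > 0` so small
that `T = S - βKKᵀ` is still positive definite (compactness of the unit sphere). For this choice
the block matrix is exactly `-(1/β) GᵀG` with `G = [2C - βKᵀ | I]`: the supply-rate inequality is a
completion of squares, driven by `KC = PA`.
-/

open Matrix

namespace Matrix

section Real

variable {ι : Type*} [Fintype ι]

lemma posDef_of_pos_on_unit_sphere {M : Matrix ι ι ℝ} (hM : M.IsHermitian)
    (hpos : ∀ y ∈ Metric.sphere (0 : ι → ℝ) 1, 0 < y ⬝ᵥ (M *ᵥ y)) : M.PosDef := by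
  refine .of_dotProduct_mulVec_pos hM fun x hx => ?_
  have hx' : 0 < ‖x‖ := norm_pos_iff.mpr hx
  have hy := hpos (‖x‖⁻¹ • x) (by simp [norm_smul, hx'.ne'])
  simp only [smul_dotProduct, mulVec_smul, dotProduct_smul, smul_eq_mul] at hy
  simpa using pos_of_mul_pos_right (pos_of_mul_pos_right hy (by positivity)) (by positivity)

lemma PosDef.exists_posDef_sub_smul {S N : Matrix ι ι ℝ} (hS : S.PosDef) (hN : N.IsHermitian) :
    ∃ ε : ℝ, 0 < ε ∧ (S - ε • N).PosDef := by
  have hSpos : ∀ y ∈ Metric.sphere (0 : ι → ℝ) 1, 0 < y ⬝ᵥ (S *ᵥ y) := fun y hy => by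
    simpa using hS.dotProduct_mulVec_pos (ne_zero_of_mem_unit_sphere ⟨y, hy⟩)
  -- the ratio of the two forms is bounded on the compact unit sphere
  obtain ⟨C, hC⟩ := (isCompact_sphere (0 : ι → ℝ) 1).exists_bound_of_continuousOn
    (f := fun y => y ⬝ᵥ (N *ᵥ y) / y ⬝ᵥ (S *ᵥ y))
    (ContinuousOn.div (by fun_prop) (by fun_prop) fun y hy => (hSpos y hy).ne')
  refine ⟨1 / (|C| + 1), by positivity, posDef_of_pos_on_unit_sphere
    (hS.isHermitian.sub (hN.smul (IsSelfAdjoint.all _))) fun y hy => ?_⟩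
  have hq := hSpos y hy
  have hratio : y ⬝ᵥ (N *ᵥ y) ≤ |C| * y ⬝ᵥ (S *ᵥ y) := by
    have := (le_abs_self _).trans ((Real.norm_eq_abs _ ▸ hC y hy).trans (le_abs_self C))
    rwa [div_le_iff₀ hq] at this
  rw [sub_mulVec, dotProduct_sub, smul_mulVec, dotProduct_smul, smul_eq_mul, sub_pos,
    div_mul_eq_mul_div, one_mul, div_lt_iff₀ (by positivity)]
  linarith

variable [DecidableEq ι]

lemma posDef_transpose_mul_add_mul_of_closedLoop {A B P : Matrix ι ι ℝ} (hB : IsUnit B.det)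
    (hAB : A * B = B * A) (hP : P.IsSymm)
    (hstab : ∀ z : ι → ℝ, z ≠ 0 →
      z ⬝ᵥ (((A - 2 • (B * A * B⁻¹))ᵀ * P + P * (A - 2 • (B * A * B⁻¹))) *ᵥ z) < 0) :
    (Aᵀ * P + P * A).PosDef := by
  have hloop : A - 2 • (B * A * B⁻¹) = -A := by
    rw [← hAB, mul_nonsing_inv_cancel_right _ _ hB, two_smul]
    abel
  have hsymm : (Aᵀ * P + P * A).IsSymm := by
    simp only [IsSymm, transpose_add, transpose_mul, transpose_transpose, hP.eq, add_comm]
  refine .of_dotProduct_mulVec_pos (isHermitian_iff_isSymm.mpr hsymm) fun z hz => ?_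
  have h := hstab z hz
  rw [hloop, transpose_neg, Matrix.neg_mul, Matrix.mul_neg, ← neg_add, neg_mulVec,
    dotProduct_neg, neg_neg_iff_pos] at h
  simpa using h

end Real

variable {m R : Type*} [Fintype m] [DecidableEq m] [Field R]

lemma fromBlocks_eq_neg_smul_transpose_mul_self (A B P : Matrix m m R) {β : R} (hβ : β ≠ 0)
    (hB : IsUnit B.det) (hP : P.IsSymm) :
    fromBlocks
        (Aᵀ * P + P * A + (Aᵀ * P + P * A - β • (P * B * (P * B)ᵀ))
          - (4 / β) • (Aᵀ * B⁻¹ᵀ * B⁻¹ * A))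
        (P * B - (2 / β) • (Aᵀ * B⁻¹ᵀ))
        (Bᵀ * P - (2 / β) • (B⁻¹ * A))
        (-((1 / β) • (1 : Matrix m m R)))
      = -((1 / β) • ((fromCols ((2 : R) • (B⁻¹ * A) - β • (P * B)ᵀ) 1)ᵀ *
          fromCols ((2 : R) • (B⁻¹ * A) - β • (P * B)ᵀ) 1)) := by
  have hKC : P * (B * (B⁻¹ * A)) = P * A := by
    rw [← Matrix.mul_assoc B, mul_nonsing_inv B hB, Matrix.one_mul]
  have hCK : Aᵀ * (B⁻¹ᵀ * (Bᵀ * P)) = Aᵀ * P := by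
    rw [← Matrix.mul_assoc B⁻¹ᵀ, ← transpose_mul, mul_nonsing_inv B hB, transpose_one,
      Matrix.one_mul]
  rw [transpose_fromCols, fromRows_mul_fromCols, fromBlocks_smul, fromBlocks_neg]
  simp only [transpose_sub, transpose_smul, transpose_mul, transpose_transpose, transpose_one,
    hP.eq, Matrix.mul_sub, Matrix.sub_mul, Matrix.mul_smul, Matrix.smul_mul, Matrix.one_mul,
    Matrix.mul_one, Matrix.mul_assoc, hKC, hCK]
  congr 1 <;> match_scalars <;> field_simp <;> ring

end Matrix

/-- For `A`, `B` with `B` invertible and `AB = BA`, if `P` is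
symmetric positive definite with `(A − 2BAB⁻¹)ᵀP + P(A − 2BAB⁻¹)` negative
definite (asymptotic stability under the output feedback `u = −2Ay` with
Lyapunov function `V = xᵀPx`), then there exist a symmetric positive definite
`T` and `β > 0` such that the block matrix
`[[AᵀP + PA + T − (4/β)AᵀB⁻ᵀB⁻¹A, PB − (2/β)AᵀB⁻ᵀ], [BᵀP − (2/β)B⁻¹A, −(1/β)I]]`
is negative semidefinite (strict (Q,S,R)-dissipativity with
`Q = (4/β)I, S = −(2/β)I, R = (1/β)I`). -/
theorem strictlyDissipative_of_asympStable {n : ℕ}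
    (A B P : Matrix (Fin n) (Fin n) ℝ)
    (hB : IsUnit B.det)
    (hAB : A * B = B * A)
    (hP : P.PosDef)
    (hstab : ∀ z : Fin n → ℝ, z ≠ 0 →
      z ⬝ᵥ (((A - 2 • (B * A * B⁻¹))ᵀ * P + P * (A - 2 • (B * A * B⁻¹))) *ᵥ z) < 0) :
    ∃ (T : Matrix (Fin n) (Fin n) ℝ) (β : ℝ), T.PosDef ∧ 0 < β ∧
      ∀ z : Fin n ⊕ Fin n → ℝ,
        z ⬝ᵥ ((Matrix.fromBlocks
            (Aᵀ * P + P * A + T - (4 / β) • (Aᵀ * B⁻¹ᵀ * B⁻¹ * A))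
            (P * B - (2 / β) • (Aᵀ * B⁻¹ᵀ))
            (Bᵀ * P - (2 / β) • (B⁻¹ * A))
            (-((1 / β) • (1 : Matrix (Fin n) (Fin n) ℝ)))) *ᵥ z) ≤ 0 := by
  have hPs : P.IsSymm := isHermitian_iff_isSymm.mp hP.isHermitian
  have hS := posDef_transpose_mul_add_mul_of_closedLoop hB hAB hPs hstab
  obtain ⟨β, hβ, hT⟩ :=
    hS.exists_posDef_sub_smul (isHermitian_iff_isSymm.mpr (isSymm_mul_transpose_self (P * B)))
  refine ⟨_, β, hT, hβ, fun z => ?_⟩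
  set G := fromCols ((2 : ℝ) • (B⁻¹ * A) - β • (P * B)ᵀ) (1 : Matrix (Fin n) (Fin n) ℝ)
  have hgram : 0 ≤ z ⬝ᵥ ((Gᵀ * G) *ᵥ z) := by
    simpa using (posSemidef_conjTranspose_mul_self G).dotProduct_mulVec_nonneg z
  rw [fromBlocks_eq_neg_smul_transpose_mul_self A B P hβ.ne' hB hPs, neg_mulVec, dotProduct_neg,
    smul_mulVec, dotProduct_smul, smul_eq_mul, neg_nonpos]
  exact mul_nonneg (by positivity) hgram
end
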